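/- arXiv:1904.07070 — 5 statements merged into one kernel-verified Lean document; each statement's English description precedes it below -/
import Mathlib

section
/- Let 𝒜 be a finite hyperplane arrangement in ℝⁿ and let F, G be faces of 𝒜. Then there exists a unique face K of 𝒜 such that for every hyperplane H ∈ 𝒜, the sign ε_H(K) equals ε_H(F) if ε_H(F) ≠ 0, and equals ε_H(G) otherwise. (In other words, the Tits product FG of two faces is again a face, even for affine arrangements.) -/
attribute [local instance] Classical.propDecidable

noncomputable section

namespace Varchenko

/-- Sign of the point `x` with respect to the hyperplane `⟨a i, x⟩ = b i`. -/
def hsign {n : ℕ} {ι : Type*} (a : ι → Fin n → ℝ) (b : ι → ℝ) (i : ι)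
    (x : Fin n → ℝ) : SignType :=
  SignType.sign (∑ j, a i j * x j - b i)

/-- The set of points realizing the sign vector `σ`. -/
def cell {n : ℕ} {ι : Type*} (a : ι → Fin n → ℝ) (b : ι → ℝ)
    (σ : ι → SignType) : Set (Fin n → ℝ) :=
  {x | ∀ i, hsign a b i x = σ i}

/-- A face is a sign vector with nonempty realization. -/
def IsFace {n : ℕ} {ι : Type*} (a : ι → Fin n → ℝ) (b : ι → ℝ)
    (σ : ι → SignType) : Prop :=
  (cell a b σ).Nonempty

/-- A chamber is a face all of whose signs are nonzero. -/
def IsChamber {n : ℕ} {ι : Type*} (a : ι → Fin n → ℝ) (b : ι → ℝ)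
    (σ : ι → SignType) : Prop :=
  IsFace a b σ ∧ ∀ i, σ i ≠ 0

/-- The Tits product of two sign vectors. -/
def tits {ι : Type*} (σ τ : ι → SignType) : ι → SignType :=
  fun i => if σ i ≠ 0 then σ i else τ i

/-- The face partial order on sign vectors. -/
def faceLE {ι : Type*} (σ τ : ι → SignType) : Prop :=
  ∀ i, σ i ≠ 0 → σ i = τ i

/-- The Aguiar–Mahajan distance function, valued in `ℤ[h_H^± : H ∈ 𝒜]`,
where the variable `h_H^ε` is `X (H, ε)`. -/
def vdist {ι : Type*} [Fintype ι] (C D : ι → SignType) :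
    MvPolynomial (ι × SignType) ℤ :=
  ∏ i ∈ Finset.univ.filter (fun i => C i = -D i), MvPolynomial.X (i, C i)

/-- The set of half-spaces containing `C` but not `D`. -/
def Hset {ι : Type*} [Fintype ι] (C D : ι → SignType) : Finset (ι × SignType) :=
  (Finset.univ.filter (fun i => C i = -D i)).image (fun i => (i, C i))

/-- The weight `b_F = ∏_{H ∈ 𝒜_F} h_H⁺ h_H⁻` of a face. -/
def weight {ι : Type*} [Fintype ι] (σ : ι → SignType) :
    MvPolynomial (ι × SignType) ℤ :=
  ∏ i ∈ Finset.univ.filter (fun i => σ i = 0),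
    (MvPolynomial.X (i, 1) * MvPolynomial.X (i, -1))

/-- The dimension of a face. -/
def fdim {n : ℕ} {ι : Type*} (a : ι → Fin n → ℝ) (b : ι → ℝ)
    (σ : ι → SignType) : ℕ :=
  Module.finrank ℝ (affineSpan ℝ (cell a b σ)).direction

/-- The minimal dimension `c_𝒜` of a face of the arrangement. -/
def minDim {n : ℕ} {ι : Type*} (a : ι → Fin n → ℝ) (b : ι → ℝ) : ℕ :=
  sInf {d : ℕ | ∃ σ, IsFace a b σ ∧ fdim a b σ = d}

/-- The hyperplane with index `i`, as a set. -/
def hplane {n : ℕ} {ι : Type*} (a : ι → Fin n → ℝ) (b : ι → ℝ) (i : ι) :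
    Set (Fin n → ℝ) :=
  {x | hsign a b i x = 0}

/-- The multiplicity `β_F^H` of a face `F`, computed using `H ∈ 𝒜_F`. -/
def betaH {n : ℕ} {ι : Type*} [Fintype ι] (a : ι → Fin n → ℝ) (b : ι → ℝ)
    (i : ι) (σ : ι → SignType) : ℕ :=
  (Finset.univ.filter (fun C : ι → SignType => IsChamber a b C ∧
    closure (cell a b C) ∩ hplane a b i = cell a b σ)).card / 2

end Varchenko

namespace Varchenko

private lemma sign_add_right {c d : ℝ} (h : |d| < |c|) :
    SignType.sign (c + d) = SignType.sign c := by
  rcases lt_trichotomy c 0 with hc | hc | hc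
  · have hd := abs_lt.mp h
    rw [abs_of_neg hc] at hd
    rw [sign_neg hc, sign_neg (by linarith [hd.2])]
  · subst hc; simp at h; linarith [abs_nonneg d]
  · have hd := abs_lt.mp h
    rw [abs_of_pos hc] at hd
    rw [sign_pos hc, sign_pos (by linarith [hd.1])]

theorem tits_product_is_face {n : ℕ} {ι : Type*} [Fintype ι]
    (a : ι → Fin n → ℝ) (b : ι → ℝ) (ha : ∀ i, a i ≠ 0)
    (F G : ι → SignType) (hF : IsFace a b F) (hG : IsFace a b G) :
    ∃! K : ι → SignType, IsFace a b K ∧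
      ∀ i, K i = if F i ≠ 0 then F i else G i := by
  obtain ⟨x, hx⟩ := hF
  obtain ⟨y, hy⟩ := hG
  set u : ι → ℝ := fun i => ∑ j, a i j * x j - b i with hu
  set v : ι → ℝ := fun i => ∑ j, a i j * y j - b i with hv
  have hxu : ∀ i, SignType.sign (u i) = F i := fun i => hx i
  have hyv : ∀ i, SignType.sign (v i) = G i := fun i => hy i
  set δ : ι → ℝ := fun i =>
    if F i ≠ 0 then |u i| / (|u i| + |v i - u i| + 1) else 1 with hδ
  set T : Finset ℝ := insert 1 (Finset.univ.image δ) with hT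
  have hTne : T.Nonempty := ⟨1, Finset.mem_insert_self _ _⟩
  set t : ℝ := T.min' hTne with ht
  have hδpos : ∀ i, 0 < δ i := by
    intro i
    by_cases hFi : F i ≠ 0
    · have hui : u i ≠ 0 := by
        intro h0
        apply hFi
        rw [← hxu i, h0, sign_zero]
      have h1 : 0 < |u i| := abs_pos.mpr hui
      have h2 : 0 < |u i| + |v i - u i| + 1 := by positivity
      simp only [hδ, if_pos hFi]
      positivity
    · simp only [hδ, if_neg hFi]; norm_num
  have htpos : 0 < t := by
    have hm := T.min'_mem hTne
    rw [← ht] at hm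
    rcases Finset.mem_insert.mp hm with h | h
    · rw [h]; norm_num
    · obtain ⟨i, _, hi⟩ := Finset.mem_image.mp h
      rw [← hi]; exact hδpos i
  have htle : ∀ i, t ≤ δ i := fun i =>
    Finset.min'_le _ _ (Finset.mem_insert_of_mem
      (Finset.mem_image.mpr ⟨i, Finset.mem_univ i, rfl⟩))
  set z : Fin n → ℝ := fun j => x j + t * (y j - x j) with hz
  have key : ∀ i, (∑ j, a i j * z j) - b i = u i + t * (v i - u i) := by
    intro i
    have : (∑ j, a i j * z j) =
        (∑ j, a i j * x j) + t * ((∑ j, a i j * y j) - (∑ j, a i j * x j)) := by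
      rw [show (∑ j, a i j * z j) =
          ∑ j, (a i j * x j + (t * (a i j * y j) - t * (a i j * x j))) from
        Finset.sum_congr rfl fun j _ => by simp only [hz]; ring]
      rw [Finset.sum_add_distrib, Finset.sum_sub_distrib, ← Finset.mul_sum,
        ← Finset.mul_sum]
      ring
    rw [this]; simp only [hu, hv]; ring
  refine ⟨fun i => if F i ≠ 0 then F i else G i, ⟨⟨z, fun i => ?_⟩, fun i => rfl⟩,
    fun K' hK' => funext fun i => hK'.2 i⟩
  show SignType.sign ((∑ j, a i j * z j) - b i) = _
  rw [key i]
  by_cases hFi : F i ≠ 0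
  · have hui : u i ≠ 0 := by
      intro h0; apply hFi; rw [← hxu i, h0, sign_zero]
    have habs : |t * (v i - u i)| < |u i| := by
      have h1 : 0 < |u i| := abs_pos.mpr hui
      have h2 : 0 < |u i| + |v i - u i| + 1 := by positivity
      have h3 : t ≤ |u i| / (|u i| + |v i - u i| + 1) := by
        have h := htle i; simp only [hδ, if_pos hFi] at h; exact h
      have h4 : t * (|u i| + |v i - u i| + 1) ≤ |u i| := by
        rw [← le_div_iff₀ h2]; exact h3
      calc |t * (v i - u i)| = t * |v i - u i| := by
            rw [abs_mul, abs_of_pos htpos]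
        _ < t * (|u i| + |v i - u i| + 1) := by
            have : 0 ≤ |u i| := abs_nonneg _
            nlinarith [abs_nonneg (v i - u i)]
        _ ≤ |u i| := h4
    rw [sign_add_right habs, hxu i]; exact (if_pos hFi).symm
  · push_neg at hFi
    have hui : u i = 0 := by
      have := hxu i; rw [hFi] at this
      exact sign_eq_zero_iff.mp this
    rw [hui, zero_add, sub_zero, sign_mul, sign_pos htpos, one_mul, hyv i]
    exact (if_neg (by simp [hFi])).symm

end Varchenko
end
end

section
/- Let 𝒜 be a finite hyperplane arrangement in ℝⁿ, D a chamber, and A a face with A ≼ D and A ≠ D. Then there exists a chamber D̃_A of 𝒜 whose sign sequence satisfies ε_H(D̃_A) = −ε_H(D) for every H ∈ 𝒜 containing A (i.e., with ε_H(A) = 0), and ε_H(D̃_A) = ε_H(A) for every other H ∈ 𝒜. -/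
attribute [local instance] Classical.propDecidable

noncomputable section

namespace Varchenko

private lemma sign_add_of_abs_lt' {v e : ℝ} (h : |e| < |v|) :
    SignType.sign (v + e) = SignType.sign v := by
  rcases lt_trichotomy v 0 with hv | hv | hv
  · rw [sign_neg hv, sign_neg]
    have h1 : |v| = -v := abs_of_neg hv
    have h2 : e ≤ |e| := le_abs_self e
    linarith
  · simp [hv, abs_nonneg] at h
    linarith [abs_nonneg e]
  · rw [sign_pos hv, sign_pos]
    have h1 : |v| = v := abs_of_pos hv
    have h2 : -|e| ≤ e := neg_abs_le e
    linarith

theorem opposite_chamber_exists {n : ℕ} {ι : Type*} [Fintype ι]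
    (a : ι → Fin n → ℝ) (b : ι → ℝ) (ha : ∀ i, a i ≠ 0)
    (D A : ι → SignType) (hD : IsChamber a b D) (hA : IsFace a b A)
    (hAD : faceLE A D) (hne : A ≠ D) :
    IsChamber a b (fun i => if A i = 0 then -(D i) else A i) := by
  obtain ⟨x, hx⟩ := hA
  obtain ⟨⟨y, hy⟩, hDne⟩ := hD
  set f : ι → ℝ := fun i => ∑ j, a i j * x j - b i with hf
  set fy : ι → ℝ := fun i => ∑ j, a i j * y j - b i with hfy
  have hxs : ∀ i, SignType.sign (f i) = A i := fun i => hx i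
  have hys : ∀ i, SignType.sign (fy i) = D i := fun i => hy i
  set g : ι → ℝ := fun i => if A i = 0 then 0 else |f i - fy i| / |f i| with hg
  have hg0 : ∀ i, 0 ≤ g i := by
    intro i
    simp only [hg]
    split
    · exact le_refl 0
    · positivity
  set r : ℝ := ∑ i, g i with hr
  have hr0 : 0 ≤ r := Finset.sum_nonneg fun i _ => hg0 i
  set t : ℝ := 1 / (1 + r) with ht
  have ht0 : 0 < t := by positivity
  have htr : t * r < 1 := by
    rw [ht, div_mul_eq_mul_div, one_mul, div_lt_one (by linarith)]
    linarith
  refine ⟨⟨fun j => (1 + t) * x j - t * y j, ?_⟩, ?_⟩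
  · intro i
    have hfz : (∑ j, a i j * ((1 + t) * x j - t * y j) - b i)
        = f i + t * (f i - fy i) := by
      have hsum : ∑ j, a i j * ((1 + t) * x j - t * y j)
          = (1 + t) * ∑ j, a i j * x j - t * ∑ j, a i j * y j := by
        rw [Finset.mul_sum, Finset.mul_sum, ← Finset.sum_sub_distrib]
        exact Finset.sum_congr rfl fun j _ => by ring
      rw [hsum, hf, hfy]; ring
    show SignType.sign _ = if A i = 0 then -(D i) else A i
    rw [hfz]
    by_cases hAi : A i = 0
    · have hfx0 : f i = 0 := by
        have := hxs i; rw [hAi] at this; exact sign_eq_zero_iff.mp this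
      rw [hfx0, if_pos hAi]
      have : (0 : ℝ) + t * (0 - fy i) = -(t * fy i) := by ring
      rw [this, Left.sign_neg, sign_mul, sign_pos ht0, one_mul, hys i]
    · have hfx0 : f i ≠ 0 := by
        intro h
        exact hAi (by rw [← hxs i, h, sign_zero])
      have habs : 0 < |f i| := abs_pos.mpr hfx0
      have hgi : g i = |f i - fy i| / |f i| := by simp [hg, hAi]
      have hgle : g i ≤ r := Finset.single_le_sum (fun j _ => hg0 j) (Finset.mem_univ i)
      have key : |t * (f i - fy i)| < |f i| := by
        rw [abs_mul, abs_of_pos ht0]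
        have h1 : t * g i ≤ t * r := by nlinarith
        have h2 : t * g i < 1 := lt_of_le_of_lt h1 htr
        have h3 : |f i - fy i| = g i * |f i| := by
          rw [hgi, div_mul_cancel₀ _ (ne_of_gt habs)]
        rw [h3]
        nlinarith
      rw [sign_add_of_abs_lt' key, if_neg hAi, hxs i]
  · intro i
    by_cases hAi : A i = 0
    · simp only [if_pos hAi]
      intro h
      exact hDne i (by rw [← neg_neg (D i), h, neg_zero])
    · simpa [if_neg hAi] using hAi

end Varchenko
end
end

section
/- Let 𝒜 be a finite hyperplane arrangement, C, D chambers, and F a face with F ≼ C. Then the set ℋ(C,D) of half-spaces containing C but not D decomposes as the disjoint union ℋ(C, FD) ⊔ ℋ(FD, D), where FD is the Tits product of F and D. Consequently, for the Aguiar–Mahajan distance function v one has v(C,D) = v(C,FD) · v(FD,D). -/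
attribute [local instance] Classical.propDecidable

noncomputable section

namespace Varchenko

lemma sign_eq_neg_self {s : SignType} (h : s = -s) : s = 0 := by
  cases s <;> simp_all

theorem halfspace_decomposition {n : ℕ} {ι : Type*} [Fintype ι]
    (a : ι → Fin n → ℝ) (b : ι → ℝ) (ha : ∀ i, a i ≠ 0)
    (C D F : ι → SignType) (hC : IsChamber a b C) (hD : IsChamber a b D)
    (hF : IsFace a b F) (hFC : faceLE F C) :
    Disjoint (Hset C (tits F D)) (Hset (tits F D) D) ∧
    Hset C (tits F D) ∪ Hset (tits F D) D = Hset C D ∧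
    vdist C D = vdist C (tits F D) * vdist (tits F D) D := by
  classical
  set T := tits F D with hT
  have hTC : ∀ i, F i ≠ 0 → T i = C i := by
    intro i h
    simp only [hT, tits, if_pos h]
    exact hFC i h
  have key : ∀ i, (C i = -T i) ↔ (F i = 0 ∧ C i = -D i) := by
    intro i
    by_cases h : F i = 0
    · simp [hT, tits, h]
    · simp only [h, false_and, iff_false]
      intro hc
      rw [hTC i h] at hc
      exact hC.2 i (sign_eq_neg_self hc)
  have key2 : ∀ i, (T i = -D i) ↔ (F i ≠ 0 ∧ C i = -D i) := by
    intro i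
    by_cases h : F i = 0
    · have hT0 : T i = D i := by simp [hT, tits, h]
      rw [hT0]
      simp only [h, ne_eq, not_true_eq_false, false_and, iff_false]
      intro hc
      exact hD.2 i (sign_eq_neg_self hc)
    · rw [hTC i h]
      simp [h]
  -- set equalities for the filters
  have hfil1 : Finset.univ.filter (fun i => C i = -T i)
      = Finset.univ.filter (fun i => F i = 0 ∧ C i = -D i) := by
    apply Finset.filter_congr; intro i _; simp [key i]
  have hfil2 : Finset.univ.filter (fun i => T i = -D i)
      = Finset.univ.filter (fun i => F i ≠ 0 ∧ C i = -D i) := by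
    apply Finset.filter_congr; intro i _; simp [key2 i]
  refine ⟨?_, ?_, ?_⟩
  · rw [Finset.disjoint_left]
    intro p h1 h2
    simp only [Hset, Finset.mem_image, Finset.mem_filter, Finset.mem_univ,
      true_and] at h1 h2
    obtain ⟨j, hj, hjp⟩ := h1
    obtain ⟨k, hk, hkp⟩ := h2
    rw [key j] at hj
    rw [key2 k] at hk
    have hjk : j = k := congrArg Prod.fst (hjp.trans hkp.symm)
    exact hk.1 (hjk ▸ hj.1)
  · ext ⟨i, s⟩
    simp only [Hset, Finset.mem_union, Finset.mem_image, Finset.mem_filter,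
      Finset.mem_univ, true_and, Prod.mk.injEq]
    constructor
    · rintro (⟨j, hj, rfl, rfl⟩ | ⟨j, hj, rfl, rfl⟩)
      · exact ⟨j, ((key j).1 hj).2, rfl, rfl⟩
      · have h := (key2 j).1 hj
        exact ⟨j, h.2, rfl, (hTC j h.1).symm⟩
    · rintro ⟨j, hj, rfl, rfl⟩
      by_cases h : F j = 0
      · exact Or.inl ⟨j, (key j).2 ⟨h, hj⟩, rfl, rfl⟩
      · exact Or.inr ⟨j, (key2 j).2 ⟨h, hj⟩, rfl, hTC j h⟩
  · unfold vdist
    rw [hfil1, hfil2]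
    have hsplit : Finset.univ.filter (fun i => C i = -D i)
        = (Finset.univ.filter (fun i => F i = 0 ∧ C i = -D i)) ∪
          (Finset.univ.filter (fun i => F i ≠ 0 ∧ C i = -D i)) := by
      ext i; by_cases h : F i = 0 <;> simp [h]
    rw [hsplit, Finset.prod_union]
    · congr 1
      apply Finset.prod_congr rfl
      intro i hi
      simp only [Finset.mem_filter] at hi
      rw [hTC i hi.2.1]
    · rw [Finset.disjoint_left]
      intro i h1 h2
      simp only [Finset.mem_filter] at h1 h2
      exact h2.2.1 h1.2.1

end Varchenko
end
end

section
/- Let 𝒜 be a finite hyperplane arrangement and let V_𝒜 be the square matrix indexed by chambers with (C,D)-entry v(D,C), with entries in the polynomial ring R_𝒜 = ℤ[h_H^± : H ∈ 𝒜]. Then the determinant of V_𝒜 is a polynomial with constant term 1 (i.e., evaluating all variables h_H^± at 0 yields 1); in particular V_𝒜 is invertible over the fraction field of R_𝒜. -/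
attribute [local instance] Classical.propDecidable

noncomputable section

namespace Varchenko

theorem varchenko_det_constant_term {n : ℕ} {ι : Type*} [Fintype ι]
    (a : ι → Fin n → ℝ) (b : ι → ℝ) (ha : ∀ i, a i ≠ 0) :
    MvPolynomial.constantCoeff
      (Matrix.det (Matrix.of fun C D : {σ : ι → SignType // IsChamber a b σ} =>
        vdist D.1 C.1)) = 1 ∧
    (Matrix.det (Matrix.of fun C D : {σ : ι → SignType // IsChamber a b σ} =>
        vdist D.1 C.1)) ≠ 0 := by
  have key : MvPolynomial.constantCoeff
      (Matrix.det (Matrix.of fun C D : {σ : ι → SignType // IsChamber a b σ} =>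
        vdist D.1 C.1)) = 1 := by
    rw [show MvPolynomial.constantCoeff (Matrix.of fun C D : {σ : ι → SignType // IsChamber a b σ} => vdist D.1 C.1).det = (MvPolynomial.constantCoeff.mapMatrix (Matrix.of fun C D : {σ : ι → SignType // IsChamber a b σ} => vdist D.1 C.1)).det from (RingHom.map_det _ _)]
    have : (MvPolynomial.constantCoeff.mapMatrix
        (Matrix.of fun C D : {σ : ι → SignType // IsChamber a b σ} => vdist D.1 C.1)) = 1 := by
      ext C D
      simp only [RingHom.mapMatrix_apply, Matrix.map_apply, Matrix.of_apply, Matrix.one_apply]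
      by_cases h : C = D
      · subst h
        have h0 : (Finset.univ.filter (fun i => C.1 i = 0)) = ∅ := by
          ext i
          simp [C.2.2 i]
        simp [vdist, h0]
      · simp only [h, if_false]
        have hne : ∃ i, D.1 i = -C.1 i := by
          by_contra hc
          push_neg at hc
          apply h
          apply Subtype.ext
          funext i
          have h1 := C.2.2 i
          have h2 := D.2.2 i
          have h3 := hc i
          rcases hx : C.1 i with _ | _ | _ <;> rcases hy : D.1 i with _ | _ | _ <;> simp_all
        obtain ⟨i, hi⟩ := hne
        rw [vdist, map_prod]
        apply Finset.prod_eq_zero (i := i)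
        · simp [hi]
        · simp [MvPolynomial.constantCoeff_X]
    rw [this, Matrix.det_one]
  refine ⟨key, fun h => ?_⟩
  rw [h] at key
  simp at key

end Varchenko
end
end

section
/- Let 𝒜 be a finite hyperplane arrangement in ℝⁿ and let F, G be faces with F ≺ G (F strictly below G). Consider the segment from a point x ∈ F to a point y ∈ G. Then the first face other than F met by this segment when leaving x is the Tits product FG; that is, there exists δ > 0 such that (1−t)x + ty ∈ FG for all t ∈ (0, δ). -/
attribute [local instance] Classical.propDecidable

noncomputable section

namespace Varchenko

theorem segment_first_face {n : ℕ} {ι : Type*} [Fintype ι]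
    (a : ι → Fin n → ℝ) (b : ι → ℝ) (ha : ∀ i, a i ≠ 0)
    (F G : ι → SignType) (hF : IsFace a b F) (hG : IsFace a b G)
    (hFG : faceLE F G) (hne : F ≠ G)
    (x y : Fin n → ℝ) (hx : x ∈ cell a b F) (hy : y ∈ cell a b G) :
    ∃ δ > (0 : ℝ), ∀ t : ℝ, 0 < t → t < δ →
      (1 - t) • x + t • y ∈ cell a b (tits F G) := by
  classical
  set fx : ι → ℝ := fun i => ∑ j, a i j * x j - b i with hfx
  set fy : ι → ℝ := fun i => ∑ j, a i j * y j - b i with hfy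
  have hxs : ∀ i, SignType.sign (fx i) = F i := fun i => hx i
  have hys : ∀ i, SignType.sign (fy i) = G i := fun i => hy i
  have key : ∀ (i : ι) (t : ℝ),
      (∑ j, a i j * ((1 - t) • x + t • y) j - b i) = (1 - t) * fx i + t * fy i := by
    intro i t
    simp only [Pi.add_apply, Pi.smul_apply, smul_eq_mul, hfx, hfy]
    rw [Finset.sum_congr rfl (fun j _ => show
      a i j * ((1 - t) * x j + t * y j)
        = (1 - t) * (a i j * x j) + t * (a i j * y j) by ring)]
    rw [Finset.sum_add_distrib, ← Finset.mul_sum, ← Finset.mul_sum]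
    ring
  have signlem : ∀ (s : SignType) (r : ℝ), s ≠ 0 →
      (SignType.sign r = s ↔ 0 < (s : ℝ) * r) := by
    rintro s r hs
    rcases s with _ | _ | _
    · exact absurd rfl hs
    · simp [sign_eq_neg_one_iff]
    · simp [sign_eq_one_iff]
  set U : ι → Set ℝ := fun i =>
    if F i = 0 then Set.univ else {t | 0 < (F i : ℝ) * ((1 - t) * fx i + t * fy i)}
    with hU
  have hUopen : ∀ i, IsOpen (U i) := by
    intro i
    by_cases h : F i = 0
    · simp only [hU, if_pos h]; exact isOpen_univ
    · simp only [hU, if_neg h]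
      exact isOpen_lt continuous_const (by fun_prop)
  have hU0 : (0 : ℝ) ∈ ⋂ i, U i := by
    refine Set.mem_iInter.2 fun i => ?_
    by_cases h : F i = 0
    · simp [hU, if_pos h]
    · simp only [hU, if_neg h, Set.mem_setOf_eq]
      have := (signlem (F i) (fx i) h).1 (hxs i)
      simpa using this
  obtain ⟨δ, hδ, hball⟩ := Metric.isOpen_iff.1 (isOpen_iInter_of_finite hUopen) 0 hU0
  refine ⟨δ, hδ, fun t ht htδ i => ?_⟩
  have htmem : t ∈ ⋂ i, U i := by
    apply hball
    simp [Real.dist_eq, abs_of_pos ht, htδ]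
  have htU := Set.mem_iInter.1 htmem i
  show SignType.sign (∑ j, a i j * ((1 - t) • x + t • y) j - b i) = tits F G i
  rw [key]
  by_cases h : F i = 0
  · have hfx0 : fx i = 0 := by
      have := hxs i; rw [h] at this; exact sign_eq_zero_iff.1 this
    rw [tits, if_neg (by simpa using h), hfx0]
    rw [show (1 - t) * 0 + t * fy i = t * fy i by ring]
    rw [sign_mul, sign_pos ht, one_mul, hys]
  · rw [tits, if_pos h]
    simp only [hU, if_neg h, Set.mem_setOf_eq] at htU
    exact (signlem (F i) _ h).2 htU

end Varchenko
end
end
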